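/- For every natural number m, the integral ∫_{ℂ²} |z_2|^{2m} (|z_1|⁴ + 2|z_1|² + |z_2|² + 1) exp(−(½|z_1|⁴ + |z_1|²|z_2|² + |z_1|²)) dλ(z_1, z_2) is infinite (equals +∞). In other words, no monomial z_2^m belongs to the weighted Bergman space A²(ℂ², h, e^{−ψ}) of the Kähler metric with potential χ(z_1,z_2) = ¼|z_1|⁴ + |z_1|²|z_2|² + |z_1|² + |z_2|² and weight ψ(z_1,z_2) = ½|z_1|⁴ + |z_1|²|z_2|² + |z_1|². -/

import Mathlib

/-!
Fix `z₂` with `t = |z₂| ≥ 1`. On the disc `|z₁| ≤ 1/(1+t)` the exponent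
`½|z₁|⁴ + |z₁|²|z₂|² + |z₁|²` stays below `5/2` while the determinant factor is at least `t²`,
so the `z₁`-integral is at least `e^{-5/2} π t²/(1+t)² ≥ e^{-5/2} π/4`. A positive lower bound
on the slices over the infinite-measure region `|z₂| ≥ 1` makes the integral infinite by Tonelli.
-/

open Complex MeasureTheory Finset

noncomputable section

/-- The density `e^{−ψ} det(h) = (|z₁|⁴ + 2|z₁|² + |z₂|² + 1)
exp(−(½|z₁|⁴ + |z₁|²|z₂|² + |z₁|²))` of the weighted Bergman space on `ℂ²`
with Kähler potential `¼|z₁|⁴ + |z₁|²|z₂|² + |z₁|² + |z₂|²` and weight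
`½|z₁|⁴ + |z₁|²|z₂|² + |z₁|²`. -/
def bergW (z : Fin 2 → ℂ) : ℝ :=
  ((Complex.normSq (z 0)) ^ 2 + 2 * Complex.normSq (z 0) +
      Complex.normSq (z 1) + 1) *
    Real.exp (-((1 / 2) * (Complex.normSq (z 0)) ^ 2 +
      Complex.normSq (z 0) * Complex.normSq (z 1) + Complex.normSq (z 0)))

open scoped ENNReal

section

variable {α : Type*} [MeasurableSpace α] {μ : Measure α}

theorem mul_measure_le_lintegral_of_forall_le {s : Set α} (hs : MeasurableSet s) {c : ℝ≥0∞}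
    {f : α → ℝ≥0∞} (h : ∀ x ∈ s, c ≤ f x) : c * μ s ≤ ∫⁻ x, f x ∂μ :=
  calc c * μ s = ∫⁻ _ in s, c ∂μ := (setLIntegral_const s c).symm
    _ ≤ ∫⁻ x in s, f x ∂μ := setLIntegral_mono' hs h
    _ ≤ ∫⁻ x, f x ∂μ := setLIntegral_le_lintegral s f

theorem measure_compl_eq_top {s : Set α} (hs : MeasurableSet s) (hμs : μ s ≠ ∞)
    (hμ : μ Set.univ = ∞) : μ sᶜ = ∞ := by
  rw [measure_compl hs hμs, hμ, ENNReal.top_sub hμs]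

end

theorem volume_setOf_one_le_norm : volume {y : ℂ | 1 ≤ ‖y‖} = ∞ := by
  have hcompl : {y : ℂ | 1 ≤ ‖y‖} = (Metric.ball 0 1)ᶜ := by
    ext y; simp
  rw [hcompl]
  exact measure_compl_eq_top measurableSet_ball measure_ball_lt_top.ne
    (measure_univ_of_isAddLeftInvariant volume)

theorem exp_mul_normSq_le_bergW (z : Fin 2 → ℂ) (h₀ : normSq (z 0) ≤ 1)
    (h₀₁ : normSq (z 0) * normSq (z 1) ≤ 1) :
    Real.exp (-(5 / 2)) * normSq (z 1) ≤ bergW z := by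
  have ha := normSq_nonneg (z 0)
  have hb := normSq_nonneg (z 1)
  have hexp : Real.exp (-(5 / 2)) ≤ Real.exp (-((1 / 2) * normSq (z 0) ^ 2 +
      normSq (z 0) * normSq (z 1) + normSq (z 0))) :=
    Real.exp_le_exp.2 (by nlinarith)
  rw [mul_comm]
  exact mul_le_mul (by nlinarith) hexp (Real.exp_pos _).le (by positivity)

theorem exp_mul_sq_norm_le_normSq_pow_mul_bergW (m : ℕ) {x y : ℂ} (hy : 1 ≤ ‖y‖)
    (hx : ‖x‖ ≤ (1 + ‖y‖)⁻¹) :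
    Real.exp (-(5 / 2)) * ‖y‖ ^ 2 ≤ normSq y ^ m * bergW ![x, y] := by
  have hxy : ‖x‖ * (1 + ‖y‖) ≤ 1 :=
    (le_div_iff₀ (by positivity)).1 (by rwa [← inv_eq_one_div])
  have hbergW := exp_mul_normSq_le_bergW ![x, y]
    (by simp only [Matrix.cons_val_zero, normSq_eq_norm_sq]; nlinarith [norm_nonneg x])
    (by simp only [Matrix.cons_val_zero, Matrix.cons_val_one, normSq_eq_norm_sq, ← mul_pow]
        exact pow_le_one₀ (by positivity) (by nlinarith [norm_nonneg x]))
  simp only [Matrix.cons_val_one, normSq_eq_norm_sq] at hbergW ⊢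
  calc Real.exp (-(5 / 2)) * ‖y‖ ^ 2 = 1 * (Real.exp (-(5 / 2)) * ‖y‖ ^ 2) := (one_mul _).symm
    _ ≤ (‖y‖ ^ 2) ^ m * bergW ![x, y] :=
      mul_le_mul (one_le_pow₀ (by nlinarith)) hbergW (by positivity) (by positivity)

theorem ofReal_le_lintegral_bergW_slice (m : ℕ) {y : ℂ} (hy : 1 ≤ ‖y‖) :
    ENNReal.ofReal (Real.exp (-(5 / 2)) * Real.pi / 4) ≤
      ∫⁻ x : ℂ, ENNReal.ofReal (normSq y ^ m * bergW ![x, y]) := by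
  set r := (1 + ‖y‖)⁻¹
  have hyr : 1 / 2 ≤ ‖y‖ * r := by
    rw [← div_eq_mul_inv, le_div_iff₀ (by positivity)]
    linarith
  calc ENNReal.ofReal (Real.exp (-(5 / 2)) * Real.pi / 4)
      ≤ ENNReal.ofReal (Real.exp (-(5 / 2)) * ‖y‖ ^ 2) * volume (Metric.closedBall (0 : ℂ) r) := by
        rw [Complex.volume_closedBall, ← ENNReal.ofReal_pow (by positivity),
          ← ENNReal.ofReal_coe_nnreal, NNReal.coe_real_pi, ← ENNReal.ofReal_mul (by positivity),
          ← ENNReal.ofReal_mul (by positivity)]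
        refine ENNReal.ofReal_le_ofReal ?_
        calc Real.exp (-(5 / 2)) * Real.pi / 4
            = Real.exp (-(5 / 2)) * Real.pi * (1 / 2) ^ 2 := by ring
          _ ≤ Real.exp (-(5 / 2)) * Real.pi * (‖y‖ * r) ^ 2 := by gcongr
          _ = Real.exp (-(5 / 2)) * ‖y‖ ^ 2 * (r ^ 2 * Real.pi) := by ring
    _ ≤ _ := mul_measure_le_lintegral_of_forall_le measurableSet_closedBall fun x hx =>
        ENNReal.ofReal_le_ofReal <| exp_mul_sq_norm_le_normSq_pow_mul_bergW m hy <|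
          mem_closedBall_zero_iff.1 hx

/-- no monomial `z₂^m` belongs to the weighted Bergman space:
its squared norm `∫ |z₂|^{2m} e^{−ψ} det(h) dλ` is infinite. -/
theorem stmt14 (m : ℕ) :
    (∫⁻ z : Fin 2 → ℂ,
      ENNReal.ofReal ((Complex.normSq (z 1)) ^ m * bergW z) ∂volume) = ⊤ := by
  rw [(volume_preserving_finTwoArrow ℂ).symm.lintegral_map_equiv, Measure.volume_eq_prod,
    lintegral_prod_symm' _ (by unfold bergW; fun_prop)]
  refine eq_top_iff.2 ?_
  calc ∞ = ENNReal.ofReal (Real.exp (-(5 / 2)) * Real.pi / 4) * volume {y : ℂ | 1 ≤ ‖y‖} := by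
        rw [volume_setOf_one_le_norm, ENNReal.mul_top (by positivity)]
    _ ≤ _ := mul_measure_le_lintegral_of_forall_le (measurableSet_le measurable_const
        measurable_norm) fun y hy => ofReal_le_lintegral_bergW_slice m hy
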